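/- Let (R_i, t_i) be a purely inseparable tower arising from (R_0, I_0) in which every R_i is a local ring, and assume I_0 ≠ R_0. Then for every j ≥ 0: (1) t_j, t̄_j, and F_j are local ring homomorphisms; (2) R_j^{s♭} is a local ring, whose maximal ideal is the set of (x_i)_{i≥0} ∈ R_j^{s♭} with x_0 in the maximal ideal of the local ring R_j/I_0R_j; (3) t_j^{s♭} : R_j^{s♭} → R_{j+1}^{s♭} is a local ring homomorphism. -/

import Mathlib

set_option synthInstance.maxHeartbeats 1000000
set_option maxHeartbeats 1000000
universe u

namespace PaperTower

variable {R : ℕ → Type u} [∀ i, CommRing (R i)]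

/-- The set of `J`-torsion elements of a commutative ring. -/
def torSet {A : Type*} [CommRing A] (J : Ideal A) : Set A :=
  {x | ∀ a ∈ J, ∃ n : ℕ, 0 < n ∧ a ^ n * x = 0}

/-- Cast ring homomorphism between quotients at equal indices. -/
def qcast (I : ∀ i, Ideal (R i)) {m n : ℕ} (h : m = n) :
    (R m ⧸ I m) →+* (R n ⧸ I n) := by subst h; exact RingHom.id _

/-- The `j`-th small tilt (inverse quasi-perfection) of a tower, as a subring of the
product of the quotients, consisting of sequences compatible with the Frobenius
projections `F`. -/
def Tilt (I : ∀ i, Ideal (R i))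
    (F : ∀ i, (R (i + 1) ⧸ I (i + 1)) →+* (R i ⧸ I i)) (j : ℕ) :
    Subring (∀ i, R (j + i) ⧸ I (j + i)) where
  carrier := {a | ∀ i, F (j + i) (a (i + 1)) = a i}
  zero_mem' := by
    intro i
    show F (j + i) 0 = 0
    simp
  one_mem' := by
    intro i
    show F (j + i) 1 = 1
    simp
  add_mem' := by
    intro a b ha hb i
    show F (j + i) (a (i + 1) + b (i + 1)) = a i + b i
    rw [map_add, ha i, hb i]
  mul_mem' := by
    intro a b ha hb i
    show F (j + i) (a (i + 1) * b (i + 1)) = a i * b i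
    rw [map_mul, ha i, hb i]
  neg_mem' := by
    intro a ha i
    show F (j + i) (-(a (i + 1))) = -(a i)
    rw [map_neg, ha i]

/-- The `m`-th projection `Φ^{(j)}_m` from the `j`-th small tilt. -/
def proj (I : ∀ i, Ideal (R i))
    (F : ∀ i, (R (i + 1) ⧸ I (i + 1)) →+* (R i ⧸ I i)) (j m : ℕ) :
    Tilt I F j →+* (R (j + m) ⧸ I (j + m)) :=
  (Pi.evalRingHom _ m).comp (Tilt I F j).subtype

lemma isUnit_qcast (I : ∀ i, Ideal (R i)) {m n : ℕ} (h : m = n) (y : R m ⧸ I m) :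
    IsUnit (qcast I h y) ↔ IsUnit y := by
  subst h; exact Iff.rfl

/-- For a purely inseparable tower of local rings with `I₀ ≠ R₀`:
(1) `t_j`, `t̄_j`, `F_j` are local homomorphisms; (2) the `j`-th small tilt is a local
ring whose maximal ideal consists of the sequences whose `0`-th component is a nonunit
of the local ring `R_j/I₀R_j`; (3) `t_j^{s♭}` is a local homomorphism. -/
theorem stmt10 (p : ℕ) (hp : p.Prime)
    (R : ℕ → Type u) [∀ i, CommRing (R i)] [∀ i, IsLocalRing (R i)]
    (t : ∀ i, R i →+* R (i + 1))
    (I : ∀ i, Ideal (R i))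
    (hpI : (p : R 0) ∈ I 0)
    (hIsucc : ∀ i, I (i + 1) = (I i).map (t i))
    (tbar : ∀ i, (R i ⧸ I i) →+* (R (i + 1) ⧸ I (i + 1)))
    (htbar : ∀ i (x : R i),
      tbar i (Ideal.Quotient.mk (I i) x) = Ideal.Quotient.mk (I (i + 1)) (t i x))
    (htbarInj : ∀ i, Function.Injective (tbar i))
    (F : ∀ i, (R (i + 1) ⧸ I (i + 1)) →+* (R i ⧸ I i))
    (hF : ∀ i (x : R (i + 1) ⧸ I (i + 1)), tbar i (F i x) = x ^ p)
    (ts : ∀ j, Tilt I F j →+* Tilt I F (j + 1))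
    (hts : ∀ (j : ℕ) (a : Tilt I F j) (i : ℕ),
      (ts j a).1 i = qcast I (by omega : (j + i) + 1 = (j + 1) + i) (tbar (j + i) (a.1 i)))
    (hI0ne : I 0 ≠ ⊤)
    (j : ℕ) :
    (IsLocalHom (t j) ∧ IsLocalHom (tbar j) ∧ IsLocalHom (F j)) ∧
    (∃ _ : IsLocalRing (Tilt I F j),
      ∀ x : Tilt I F j,
        x ∈ IsLocalRing.maximalIdeal (Tilt I F j) ↔ x.1 0 ∈ nonunits (R j ⧸ I j)) ∧
    IsLocalHom (ts j) := by
  -- All ideals are proper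
  have hIne : ∀ i, I i ≠ ⊤ := by
    intro i
    induction i with
    | zero => exact hI0ne
    | succ n ih =>
      intro htop
      haveI : Nontrivial (R n ⧸ I n) := Ideal.Quotient.nontrivial_iff.mpr ih
      have h1 : (tbar n) 1 = (tbar n) 0 := by
        rw [map_one, map_zero]
        exact Ideal.Quotient.eq_zero_iff_mem.mpr (htop ▸ Submodule.mem_top :
          (1 : R (n + 1)) ∈ I (n + 1))
      exact one_ne_zero (htbarInj n h1)
  haveI hnontriv : ∀ i, Nontrivial (R i ⧸ I i) := fun i => Ideal.Quotient.nontrivial_iff.mpr (hIne i)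
  haveI hlocQ : ∀ i, IsLocalRing (R i ⧸ I i) := fun i =>
    IsLocalRing.of_surjective' (Ideal.Quotient.mk (I i)) Ideal.Quotient.mk_surjective
  have hmkLocal : ∀ i, IsLocalHom (Ideal.Quotient.mk (I i)) := fun i =>
    IsLocalHom.of_surjective _ Ideal.Quotient.mk_surjective
  -- F is local
  have hFlocal : ∀ i, IsLocalHom (F i) := by
    intro i
    refine ⟨fun a ha => ?_⟩
    have h1 : IsUnit (a ^ p) := by rw [← hF i a]; exact ha.map (tbar i)
    exact (isUnit_pow_iff hp.ne_zero).mp h1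
  -- tbar is local
  have htbarLocal : ∀ i, IsLocalHom (tbar i) := by
    intro i
    refine ⟨fun a ha => ?_⟩
    have h1 : F i (tbar i a) = a ^ p := by
      apply htbarInj i
      rw [hF i, map_pow]
    have h2 : IsUnit (a ^ p) := h1 ▸ ha.map (F i)
    exact (isUnit_pow_iff hp.ne_zero).mp h2
  -- t is local
  have htLocal : ∀ i, IsLocalHom (t i) := by
    intro i
    refine ⟨fun a ha => ?_⟩
    have h1 : IsUnit (tbar i (Ideal.Quotient.mk (I i) a)) := by
      rw [htbar]; exact ha.map (Ideal.Quotient.mk (I (i + 1)))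
    exact (hmkLocal i).map_nonunit _ ((htbarLocal i).map_nonunit _ h1)
  -- key lemma: an element of the tilt whose 0-th component is a unit is a unit
  have key : ∀ x : Tilt I F j, IsUnit (x.1 0) → IsUnit x := by
    intro x hx0
    have hall : ∀ i, IsUnit (x.1 i) := by
      intro i
      induction i with
      | zero => exact hx0
      | succ n ih =>
        have h1 : IsUnit (F (j + n) (x.1 (n + 1))) := by rw [x.2 n]; exact ih
        exact (hFlocal (j + n)).map_nonunit _ h1
    set y : ∀ i, R (j + i) ⧸ I (j + i) := fun i => ↑(hall i).unit⁻¹ with hy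
    have hxy : ∀ i, x.1 i * y i = 1 := by
      intro i
      simp [hy, IsUnit.mul_val_inv]
    have hymem : y ∈ Tilt I F j := by
      intro i
      have h1 : x.1 i * F (j + i) (y (i + 1)) = 1 := by
        rw [← x.2 i, ← map_mul, hxy (i + 1), map_one]
      exact (hall i).mul_left_cancel (by rw [h1, hxy i])
    refine IsUnit.of_mul_eq_one (a := x) ⟨y, hymem⟩ ?_
    ext i
    exact hxy i
  haveI hTnontriv : Nontrivial (Tilt I F j) := by
    refine nontrivial_of_ne 0 1 fun h => ?_
    have h0 : ((0 : Tilt I F j).1 0 : R (j + 0) ⧸ I (j + 0)) = (1 : Tilt I F j).1 0 :=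
      congrArg (fun z : Tilt I F j => z.1 0) h
    exact zero_ne_one h0
  haveI hTloc : IsLocalRing (Tilt I F j) := by
    refine IsLocalRing.of_isUnit_or_isUnit_one_sub_self fun a => ?_
    rcases IsLocalRing.isUnit_or_isUnit_one_sub_self (a.1 0) with h | h
    · exact Or.inl (key a h)
    · exact Or.inr (key (1 - a) h)
  refine ⟨⟨htLocal j, htbarLocal j, hFlocal j⟩, ⟨hTloc, ?_⟩, ?_⟩
  · intro x
    rw [IsLocalRing.mem_maximalIdeal, mem_nonunits_iff]
    constructor
    · intro hnx
      exact fun hx0 => hnx (key x hx0)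
    · intro hx0 hx
      exact hx0 (hx.map (proj I F j 0))
  · refine ⟨fun a ha => ?_⟩
    have h1 : IsUnit ((ts j a).1 0) := ha.map (proj I F (j + 1) 0)
    rw [hts j a 0] at h1
    have h2 : IsUnit (tbar (j + 0) (a.1 0)) := (isUnit_qcast I _ _).mp h1
    exact key a ((htbarLocal (j + 0)).map_nonunit _ h2)

end PaperTower
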